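/- arXiv:1103.1109 — 2 statements merged into one kernel-verified Lean document; each statement's English description precedes it below -/
import Mathlib

section
/- Let m > 0 and t > 0 be real numbers, let q be an even positive integer, and let D_1, …, D_q be mutually independent positive real-valued random variables such that for every real x > 0 and every j, the probability that D_j ≤ x is at most x/m. Then the probability that D_1 + ⋯ + D_q ≤ t is at most (q choose q/2) · (2t/(qm))^{q/2}, which is at most (4et/(qm))^{q/2}. -/
open MeasureTheory

/-! If `∑ D j ≤ t` with `q = 2k` positive summands, then at least `k` of them are at most
`c = t / k`, since otherwise `k + 1` summands exceed `c` and the sum exceeds `t`.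
A union bound over the `(q choose k)` sets of `k` indices, together with independence, bounds the
probability of this event by `(q choose k) (c / m)^k`. Finally `(2k choose k) ≤ 4^k ≤ (2e)^k`. -/

open Finset ProbabilityTheory
open scoped ENNReal

lemma le_card_filter_le_of_sum_le {ι : Type*} [Fintype ι] {x : ι → ℝ} (hx : ∀ i, 0 ≤ x i)
    {c : ℝ} (hc : 0 < c) {k l : ℕ} (hkl : k + l = Fintype.card ι)
    (hsum : ∑ i, x i ≤ l * c) : k ≤ #{i | x i ≤ c} := by
  by_contra! hlt
  have hcard := card_filter_add_card_filter_not (s := univ) (fun i => x i ≤ c)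
  rw [card_univ] at hcard
  have hbig : ((l + 1 : ℕ) : ℝ) ≤ #{i | ¬ x i ≤ c} := by exact_mod_cast (by omega)
  have hlarge : #{i | ¬ x i ≤ c} • c ≤ ∑ i ∈ {i | ¬ x i ≤ c}, x i :=
    card_nsmul_le_sum _ x c fun i hi => (not_le.mp (mem_filter.mp hi).2).le
  have hpart : ∑ i ∈ {i | ¬ x i ≤ c}, x i ≤ ∑ i, x i :=
    sum_le_sum_of_subset_of_nonneg (subset_univ _) fun i _ _ => hx i
  rw [nsmul_eq_mul] at hlarge
  push_cast at hbig
  nlinarith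

namespace ProbabilityTheory.iIndepFun

variable {Ω ι β : Type*} [MeasurableSpace Ω] [MeasurableSpace β] {μ : Measure Ω}
  {X : ι → Ω → β} {s : Set β} {p : ℝ≥0∞}

lemma measure_biInter_preimage_le_pow (hX : iIndepFun X μ) (hs : MeasurableSet s)
    (hp : ∀ i, μ (X i ⁻¹' s) ≤ p) (S : Finset ι) : μ (⋂ i ∈ S, X i ⁻¹' s) ≤ p ^ #S := by
  rw [hX.measure_inter_preimage_eq_mul S fun _ _ => hs]
  exact prod_le_pow_card _ _ _ fun i _ => hp i

lemma measure_le_card_filter_mem_le [Fintype ι] [DecidablePred (· ∈ s)] (hX : iIndepFun X μ)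
    (hs : MeasurableSet s) (hp : ∀ i, μ (X i ⁻¹' s) ≤ p) (k : ℕ) :
    μ {ω | k ≤ #{i | X i ω ∈ s}} ≤ (Fintype.card ι).choose k * p ^ k := by
  have hcover : {ω | k ≤ #{i | X i ω ∈ s}} ⊆
      ⋃ S ∈ powersetCard k (univ : Finset ι), ⋂ i ∈ S, X i ⁻¹' s := by
    intro ω hω
    obtain ⟨S, hS, hSk⟩ := exists_subset_card_eq hω
    exact Set.mem_biUnion (mem_powersetCard.mpr ⟨subset_univ S, hSk⟩)
      (Set.mem_iInter₂.mpr fun i hi => (mem_filter.mp (hS hi)).2)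
  calc μ {ω | k ≤ #{i | X i ω ∈ s}}
      ≤ μ (⋃ S ∈ powersetCard k (univ : Finset ι), ⋂ i ∈ S, X i ⁻¹' s) := measure_mono hcover
    _ ≤ ∑ S ∈ powersetCard k (univ : Finset ι), μ (⋂ i ∈ S, X i ⁻¹' s) :=
      measure_biUnion_finset_le _ _
    _ ≤ ∑ _S ∈ powersetCard k (univ : Finset ι), p ^ k :=
      sum_le_sum fun S hS => (mem_powersetCard.mp hS).2 ▸ hX.measure_biInter_preimage_le_pow hs hp S
    _ = (Fintype.card ι).choose k * p ^ k := by
      rw [sum_const, card_powersetCard, card_univ, nsmul_eq_mul]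

end ProbabilityTheory.iIndepFun

theorem prob_sum_small_of_indep_durations_general
    {Ω : Type*} [MeasurableSpace Ω] (μ : Measure Ω)
    (m t : ℝ) (hm : 0 < m) (ht : 0 < t)
    (q : ℕ) (hq : 0 < q) (hqe : Even q)
    (D : Fin q → Ω → ℝ)
    (hindep : ProbabilityTheory.iIndepFun D μ)
    (hpos : ∀ j ω, 0 < D j ω)
    (hcdf : ∀ x : ℝ, 0 < x → ∀ j, μ {ω : Ω | D j ω ≤ x} ≤ ENNReal.ofReal (x / m)) :
    μ {ω : Ω | ∑ j, D j ω ≤ t} ≤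
        ENNReal.ofReal ((q.choose (q / 2) : ℝ) * (2 * t / (q * m)) ^ (q / 2)) ∧
      (q.choose (q / 2) : ℝ) * (2 * t / (q * m)) ^ (q / 2) ≤
        (4 * Real.exp 1 * t / (q * m)) ^ (q / 2) := by
  obtain ⟨k, rfl⟩ := hqe
  have hk : (0 : ℝ) < k := by exact_mod_cast (by omega : 0 < k)
  have hc : 0 < t / k := by positivity
  have ha : 2 * t / (((k + k : ℕ) : ℝ) * m) = t / k / m := by push_cast; field_simp; ring
  rw [show (k + k) / 2 = k by omega, ha]
  constructor
  · have hcover : {ω | ∑ j, D j ω ≤ t} ⊆ {ω | k ≤ #{j | D j ω ∈ Set.Iic (t / k)}} :=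
      fun ω hω => le_card_filter_le_of_sum_le (fun j => (hpos j ω).le) hc
        (l := k) (by simp) (by rw [mul_div_cancel₀ _ hk.ne']; exact hω)
    calc μ {ω | ∑ j, D j ω ≤ t}
        ≤ (k + k).choose k * ENNReal.ofReal (t / k / m) ^ k := by
          simpa using (measure_mono hcover).trans
            (hindep.measure_le_card_filter_mem_le measurableSet_Iic (hcdf _ hc) k)
      _ = _ := by
          rw [← ENNReal.ofReal_pow (by positivity), ← ENNReal.ofReal_natCast,
            ← ENNReal.ofReal_mul (by positivity)]
  · have hchoose : ((k + k).choose k : ℝ) ≤ 4 ^ k := by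
      have := Nat.centralBinom_le_four_pow k
      rw [Nat.centralBinom, two_mul] at this
      exact_mod_cast this
    calc ((k + k).choose k : ℝ) * (t / k / m) ^ k
        ≤ 4 ^ k * (t / k / m) ^ k := by gcongr
      _ ≤ (2 * Real.exp 1) ^ k * (t / k / m) ^ k := by
          gcongr; linarith [Real.add_one_le_exp 1]
      _ = _ := by rw [← mul_pow]; congr 1; push_cast; field_simp; ring

/-- If `D 1, …, D q` are mutually independent positive random variables with
`Pr[D j ≤ x] ≤ x/m` for every `x > 0`, then for even `q`,
`Pr[∑ j, D j ≤ t] ≤ (q choose q/2) * (2t/(qm))^(q/2) ≤ (4et/(qm))^(q/2)`. -/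
theorem prob_sum_small_of_indep_durations
    {Ω : Type*} [MeasurableSpace Ω] (μ : Measure Ω) [IsProbabilityMeasure μ]
    (m t : ℝ) (hm : 0 < m) (ht : 0 < t)
    (q : ℕ) (hq : 0 < q) (hqe : Even q)
    (D : Fin q → Ω → ℝ) (hmeas : ∀ j, Measurable (D j))
    (hindep : ProbabilityTheory.iIndepFun D μ)
    (hpos : ∀ j ω, 0 < D j ω)
    (hcdf : ∀ x : ℝ, 0 < x → ∀ j, μ {ω : Ω | D j ω ≤ x} ≤ ENNReal.ofReal (x / m)) :
    μ {ω : Ω | ∑ j, D j ω ≤ t} ≤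
        ENNReal.ofReal ((q.choose (q / 2) : ℝ) * (2 * t / (q * m)) ^ (q / 2)) ∧
      (q.choose (q / 2) : ℝ) * (2 * t / (q * m)) ^ (q / 2) ≤
        (4 * Real.exp 1 * t / (q * m)) ^ (q / 2) :=
  prob_sum_small_of_indep_durations_general μ m t hm ht q hq hqe D hindep hpos hcdf
end

section
/- Let M ≥ 2 be an integer and let (y_k)_{k ≥ 0} be a sequence of real numbers with y_0 = 0, y_1 = 1/M, y_k = (1/M) · Σ_{i=1}^{k−1} (y_i + 1) for 2 ≤ k < M, and y_k = (1/M) · Σ_{i=1}^{M} (y_{k−i} + 1) for k ≥ M. Then y_k ≤ 5e·k/M for every k ≥ 1, where e is Euler's number. -/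
/-- Gauss sum over `Icc 1 n` in the reals. -/
lemma gauss_icc (n : ℕ) : (∑ i ∈ Finset.Icc 1 n, (i : ℝ)) = n * (n + 1) / 2 := by
  induction n with
  | zero => simp
  | succ n ih =>
    rw [Finset.sum_Icc_succ_top (by omega), ih]
    push_cast
    ring

lemma affine_sum (n : ℕ) (a b : ℝ) :
    (∑ i ∈ Finset.Icc 1 n, (a * (i : ℝ) + b)) = a * (n * (n + 1) / 2) + n * b := by
  rw [Finset.sum_add_distrib, Finset.sum_const, Nat.card_Icc, ← Finset.mul_sum, gauss_icc]
  simp [nsmul_eq_mul]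

/-- The expected number of epochs `y k` terminated along a deletion sequence of
length `k`, given by `y 0 = 0`, `y 1 = 1/M`,
`y k = (1/M) ∑_{i=1}^{k-1} (y i + 1)` for `2 ≤ k < M` and
`y k = (1/M) ∑_{i=1}^{M} (y (k-i) + 1)` for `k ≥ M`,
satisfies `y k ≤ 5e·k/M` for all `k ≥ 1`. -/
theorem expected_epochs_le (M : ℕ) (hM : 2 ≤ M) (y : ℕ → ℝ)
    (h0 : y 0 = 0)
    (h1 : y 1 = 1 / (M : ℝ))
    (hrec₁ : ∀ k, 2 ≤ k → k < M →
      y k = (1 / (M : ℝ)) * ∑ i ∈ Finset.Icc 1 (k - 1), (y i + 1))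
    (hrec₂ : ∀ k, M ≤ k →
      y k = (1 / (M : ℝ)) * ∑ i ∈ Finset.Icc 1 M, (y (k - i) + 1)) :
    ∀ k, 1 ≤ k → y k ≤ 5 * Real.exp 1 * k / M := by
  have hMpos : (0 : ℝ) < M := by exact_mod_cast (by omega : 0 < M)
  -- Key claim: y k ≤ 2k/M for all k.
  have key : ∀ k, y k ≤ 2 * k / M := by
    intro k
    induction k using Nat.strong_induction_on with
    | _ k ih =>
      rcases Nat.lt_or_ge k 2 with hk2 | hk2
      · interval_cases k
        · rw [h0]; positivity
        · rw [h1, div_le_div_iff₀ hMpos hMpos]; push_cast; nlinarith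
      rcases Nat.lt_or_ge k M with hkM | hkM
      · -- case 2 ≤ k < M
        rw [hrec₁ k hk2 hkM]
        have hsum : (∑ i ∈ Finset.Icc 1 (k - 1), (y i + 1))
            ≤ ∑ i ∈ Finset.Icc 1 (k - 1), ((2 / (M : ℝ)) * (i : ℝ) + 1) := by
          apply Finset.sum_le_sum
          intro i hi
          simp only [Finset.mem_Icc] at hi
          have h := ih i (by omega)
          rw [mul_div_assoc] at h
          have he : (2 : ℝ) * ((i : ℝ) / M) = 2 / M * i := by ring
          linarith [h]
        rw [affine_sum] at hsum
        have hcast : ((k - 1 : ℕ) : ℝ) = (k : ℝ) - 1 := by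
          have : 1 ≤ k := by omega
          push_cast [this]; ring
        rw [hcast] at hsum
        have hkR : (2 : ℝ) ≤ (k : ℝ) := by exact_mod_cast hk2
        have hkMR : (k : ℝ) ≤ (M : ℝ) := by exact_mod_cast hkM.le
        have h1M : (0 : ℝ) < 1 / M := by positivity
        have : (1 / (M : ℝ)) * ∑ i ∈ Finset.Icc 1 (k - 1), (y i + 1)
            ≤ (1 / (M : ℝ)) * (2 / M * ((k - 1) * ((k - 1) + 1) / 2) + (k - 1) * 1) := by
          exact mul_le_mul_of_nonneg_left hsum h1M.le
        refine this.trans ?_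
        have hrw : 2 * (k : ℝ) / M = 1 / M * (2 * k) := by ring
        rw [hrw]
        apply mul_le_mul_of_nonneg_left _ h1M.le
        have heq : 2 / (M : ℝ) * (((k : ℝ) - 1) * (((k : ℝ) - 1) + 1) / 2)
            = ((k : ℝ) - 1) * k / M := by field_simp; ring
        rw [heq]
        have hb : ((k : ℝ) - 1) * k / M ≤ (k : ℝ) := by
          rw [div_le_iff₀ hMpos]
          nlinarith
        linarith
      · -- case k ≥ M
        rw [hrec₂ k hkM]
        have hsum : (∑ i ∈ Finset.Icc 1 M, (y (k - i) + 1))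
            ≤ ∑ i ∈ Finset.Icc 1 M, ((2 / (M : ℝ)) * (-(i : ℝ)) + (2 * k / M + 1)) := by
          apply Finset.sum_le_sum
          intro i hi
          simp only [Finset.mem_Icc] at hi
          have h := ih (k - i) (by omega)
          have hcast : ((k - i : ℕ) : ℝ) = (k : ℝ) - (i : ℝ) := by
            have : i ≤ k := le_trans hi.2 hkM
            push_cast [this]; ring
          rw [hcast] at h
          have expand : 2 * ((k : ℝ) - i) / M = 2 / M * (-(i : ℝ)) + 2 * k / M := by
            field_simp; ring
          rw [expand] at h
          linarith
        have hsum2 : (∑ i ∈ Finset.Icc 1 M, ((2 / (M : ℝ)) * (-(i : ℝ)) + (2 * k / M + 1)))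
            = 2 * k - 1 := by
          have : (∑ i ∈ Finset.Icc 1 M, ((2 / (M : ℝ)) * (-(i : ℝ)) + (2 * k / M + 1)))
              = -((2 / (M : ℝ)) * (∑ i ∈ Finset.Icc 1 M, (i : ℝ)))
                + M * (2 * k / M + 1) := by
            rw [Finset.sum_add_distrib, Finset.sum_const, Nat.card_Icc, ← Finset.mul_sum]
            simp [nsmul_eq_mul, Finset.mul_sum]
            ring
          rw [this, gauss_icc]
          field_simp
          ring
        rw [hsum2] at hsum
        have h1M : (0 : ℝ) < 1 / M := by positivity
        have : (1 / (M : ℝ)) * ∑ i ∈ Finset.Icc 1 M, (y (k - i) + 1)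
            ≤ (1 / (M : ℝ)) * (2 * k - 1) := mul_le_mul_of_nonneg_left hsum h1M.le
        refine this.trans ?_
        have hrw : 2 * (k : ℝ) / M = 1 / M * (2 * k) := by ring
        rw [hrw]
        apply mul_le_mul_of_nonneg_left _ h1M.le
        linarith
  intro k hk
  have h2 : (2 : ℝ) ≤ 5 * Real.exp 1 := by
    nlinarith [Real.one_le_exp (by norm_num : (0:ℝ) ≤ 1)]
  calc y k ≤ 2 * k / M := key k
    _ ≤ 5 * Real.exp 1 * k / M := by
        gcongr
end
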